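/- Let Σ = diag(λ_1, λ_2, λ_3) with λ_1 > λ_2 > λ_3 > 0, E a symmetric 3×3 matrix, λ̂ a real number not equal to λ_2 or λ_3, D₁ = diag(0, −1/(λ_2−λ̂), −1/(λ_3−λ̂)), P₁ = diag(0,1,1). Suppose η = (1, η_2, η_3)ᵀ satisfies (Σ+E)η = λ̂ η and I₃ − D₁ E P₁ is invertible. Then (0, η_2, η_3)ᵀ = (I₃ − D₁ E P₁)^{-1} D₁ (0, E_{21}, E_{31})ᵀ. -/

import Mathlib

/-!
Rewrite the eigen-equation as `E η = (λ̂ - Σ) η`. Since `D₁ (λ̂ - Σ) = P₁` and `P₁ η = Δμ`, applying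
`D₁` gives `Δμ = D₁ E η = D₁ E e₁ + D₁ E P₁ Δμ`, a linear system for `Δμ` that the invertibility of
`I - D₁ E P₁` solves; `D₁` ignores the first coordinate, so `D₁ E e₁ = D₁ (0, E₂₁, E₃₁)ᵀ`.
-/

open Matrix

theorem mulVec_eq_diagonal_mulVec_of_add_mulVec_eq_smul {n R : Type*} [Fintype n]
    [DecidableEq n] [CommRing R] {d : n → R} {E : Matrix n n R} {μ : R} {η : n → R}
    (h : (diagonal d + E) *ᵥ η = μ • η) : E *ᵥ η = diagonal (fun i => μ - d i) *ᵥ η := by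
  ext i
  have hi := congrFun h i
  simp only [add_mulVec, mulVec_diagonal, Pi.add_apply, Pi.smul_apply, smul_eq_mul] at hi ⊢
  linear_combination hi

theorem diagonal_mul_diagonal_sub_eq {K : Type*} [Field K] {a b c μ : K} (ha : μ ≠ a)
    (hb : μ ≠ b) :
    diagonal ![0, -(a - μ)⁻¹, -(b - μ)⁻¹] * diagonal (fun i => μ - ![c, a, b] i)
      = diagonal ![0, 1, 1] := by
  have ha' : a - μ ≠ 0 := sub_ne_zero.2 ha.symm
  have hb' : b - μ ≠ 0 := sub_ne_zero.2 hb.symm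
  rw [diagonal_mul_diagonal]
  congr 1
  ext i
  fin_cases i <;> simp <;> field_simp <;> ring

theorem one_sub_mul_mulVec_eigenvector_tail {K : Type*} [Field K] {a b c μ x y : K}
    (ha : μ ≠ a) (hb : μ ≠ b) (E : Matrix (Fin 3) (Fin 3) K)
    (heig : (diagonal ![c, a, b] + E) *ᵥ ![1, x, y] = μ • ![1, x, y]) :
    (1 - diagonal ![0, -(a - μ)⁻¹, -(b - μ)⁻¹] * E * diagonal ![0, 1, 1]) *ᵥ ![0, x, y]
      = diagonal ![0, -(a - μ)⁻¹, -(b - μ)⁻¹] *ᵥ ![0, E 1 0, E 2 0] := by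
  set D := diagonal ![0, -(a - μ)⁻¹, -(b - μ)⁻¹]
  set P : Matrix (Fin 3) (Fin 3) K := diagonal ![0, 1, 1]
  have hη : ![1, x, y] = ![1, 0, 0] + ![0, x, y] := by simp
  have hPη : P *ᵥ ![1, x, y] = ![0, x, y] := by
    ext i; fin_cases i <;> simp [P, mulVec_diagonal]
  have hPΔ : P *ᵥ ![0, x, y] = ![0, x, y] := by
    ext i; fin_cases i <;> simp [P, mulVec_diagonal]
  have hcol : D *ᵥ (E *ᵥ ![1, 0, 0]) = D *ᵥ ![0, E 1 0, E 2 0] := by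
    ext i; fin_cases i <;> simp [D, mulVec, dotProduct, Fin.sum_univ_three]
  calc (1 - D * E * P) *ᵥ ![0, x, y]
      = P *ᵥ ![1, x, y] - D *ᵥ (E *ᵥ ![0, x, y]) := by
        rw [sub_mulVec, one_mulVec, ← mulVec_mulVec, ← mulVec_mulVec, hPΔ, hPη]
    _ = D *ᵥ (E *ᵥ ![1, x, y]) - D *ᵥ (E *ᵥ ![0, x, y]) := by
        congr 1
        rw [mulVec_eq_diagonal_mulVec_of_add_mulVec_eq_smul heig, mulVec_mulVec,
          diagonal_mul_diagonal_sub_eq ha hb]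
    _ = D *ᵥ ![0, E 1 0, E 2 0] := by
        rw [← hcol, hη, mulVec_add, mulVec_add, add_sub_cancel_right]

theorem stmt_12_general (lam1 lam2 lam3 lamHat eta2 eta3 : ℝ)
    (hne2 : lamHat ≠ lam2) (hne3 : lamHat ≠ lam3)
    (E : Matrix (Fin 3) (Fin 3) ℝ)
    (heig : (Matrix.diagonal ![lam1, lam2, lam3] + E).mulVec ![1, eta2, eta3]
      = lamHat • ![1, eta2, eta3]) :
    let D1 : Matrix (Fin 3) (Fin 3) ℝ :=
      Matrix.diagonal ![0, -(lam2 - lamHat)⁻¹, -(lam3 - lamHat)⁻¹]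
    let P1 : Matrix (Fin 3) (Fin 3) ℝ := Matrix.diagonal ![0, 1, 1]
    IsUnit (1 - D1 * E * P1) →
    (![0, eta2, eta3] : Fin 3 → ℝ)
      = ((1 - D1 * E * P1)⁻¹ * D1).mulVec ![0, E 1 0, E 2 0] := by
  intro D1 P1 hInv
  have := invertibleOfIsUnitDet _ ((isUnit_iff_isUnit_det _).mp hInv)
  rw [← mulVec_mulVec]
  exact (inv_mulVec_eq_vec (one_sub_mul_mulVec_eigenvector_tail hne2 hne3 E heig).symm).symm

/-- For `Σ = diag(λ₁,λ₂,λ₃)` with `λ₁ > λ₂ > λ₃ > 0`, `E` symmetric, `λ̂ ∉ {λ₂, λ₃}`,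
`D₁ = diag(0, -1/(λ₂-λ̂), -1/(λ₃-λ̂))`, `P₁ = diag(0,1,1)`, if `(Σ+E)η = λ̂η` with
`η = (1,η₂,η₃)ᵀ` and `I - D₁EP₁` is invertible, then
`(0,η₂,η₃)ᵀ = (I - D₁EP₁)⁻¹ D₁ (0, E₂₁, E₃₁)ᵀ`. -/
theorem stmt_12 (lam1 lam2 lam3 lamHat eta2 eta3 : ℝ)
    (h12 : lam2 < lam1) (h23 : lam3 < lam2) (h3 : 0 < lam3)
    (hne2 : lamHat ≠ lam2) (hne3 : lamHat ≠ lam3)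
    (E : Matrix (Fin 3) (Fin 3) ℝ) (hE : E.IsSymm)
    (heig : (Matrix.diagonal ![lam1, lam2, lam3] + E).mulVec ![1, eta2, eta3]
      = lamHat • ![1, eta2, eta3]) :
    let D1 : Matrix (Fin 3) (Fin 3) ℝ :=
      Matrix.diagonal ![0, -(lam2 - lamHat)⁻¹, -(lam3 - lamHat)⁻¹]
    let P1 : Matrix (Fin 3) (Fin 3) ℝ := Matrix.diagonal ![0, 1, 1]
    IsUnit (1 - D1 * E * P1) →
    (![0, eta2, eta3] : Fin 3 → ℝ)
      = ((1 - D1 * E * P1)⁻¹ * D1).mulVec ![0, E 1 0, E 2 0] :=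
  stmt_12_general lam1 lam2 lam3 lamHat eta2 eta3 hne2 hne3 E heig
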